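/- arXiv:0706.3841 — 3 statements merged into one kernel-verified Lean document; each statement's English description precedes it below -/
import Mathlib

section
/- Let q = p^n with p prime, and let N = N_3(F_q) be the Heisenberg group of upper unitriangular 3×3 matrices over F_q. For F_p-linear endomorphisms f, g of F_q, define the twisted horizontal subgroups ^fH = {[[1,x,f(x)],[0,1,0],[0,0,1]] : x ∈ F_q} and ^gH similarly. Then ^fH and ^gH are conjugate in N if and only if f − g is multiplication by some element of F_q (i.e., f − g is F_q-linear). -/
/-- The Heisenberg group `N₃(K)` of upper unitriangular `3×3` matrices
`[[1, x, t], [0, 1, y], [0, 0, 1]]` over `K`, recorded by the entries `x`, `y`, `t`. -/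
@[ext]
structure Heisenberg (K : Type*) where
  x : K
  y : K
  t : K

namespace Heisenberg

variable {K : Type*} [Field K]

/-- Matrix multiplication of the corresponding unitriangular matrices. -/
instance : Mul (Heisenberg K) := ⟨fun a b => ⟨a.x + b.x, a.y + b.y, a.t + b.t + a.x * b.y⟩⟩
instance : One (Heisenberg K) := ⟨⟨0, 0, 0⟩⟩
instance : Inv (Heisenberg K) := ⟨fun a => ⟨-a.x, -a.y, -a.t + a.x * a.y⟩⟩

@[simp] theorem mul_x (a b : Heisenberg K) : (a * b).x = a.x + b.x := rfl
@[simp] theorem mul_y (a b : Heisenberg K) : (a * b).y = a.y + b.y := rfl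
@[simp] theorem mul_t (a b : Heisenberg K) : (a * b).t = a.t + b.t + a.x * b.y := rfl
@[simp] theorem one_x : (1 : Heisenberg K).x = 0 := rfl
@[simp] theorem one_y : (1 : Heisenberg K).y = 0 := rfl
@[simp] theorem one_t : (1 : Heisenberg K).t = 0 := rfl
@[simp] theorem inv_x (a : Heisenberg K) : a⁻¹.x = -a.x := rfl
@[simp] theorem inv_y (a : Heisenberg K) : a⁻¹.y = -a.y := rfl
@[simp] theorem inv_t (a : Heisenberg K) : a⁻¹.t = -a.t + a.x * a.y := rfl

instance : Group (Heisenberg K) where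
  mul_assoc a b c := by ext <;> simp <;> ring
  one_mul a := by ext <;> simp
  mul_one a := by ext <;> simp
  inv_mul_cancel a := by ext <;> simp

end Heisenberg

/-- The `f`-twisted horizontal subgroup `{[[1, x, f(x)], [0, 1, 0], [0, 0, 1]] : x ∈ K}`
of the Heisenberg group, for an `F_p`-linear map `f`. -/
def twistedHorizontal {p : ℕ} [Fact p.Prime] {K : Type*} [Field K] [Module (ZMod p) K]
    (f : K →ₗ[ZMod p] K) : Subgroup (Heisenberg K) where
  carrier := {h | h.y = 0 ∧ h.t = f h.x}
  one_mem' := by simp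
  mul_mem' := by
    rintro a b ⟨h1, h1'⟩ ⟨h2, h2'⟩
    refine ⟨by simp [h1, h2], ?_⟩
    simp [h1, h2, h1', h2', map_add]
  inv_mem' := by
    rintro a ⟨h1, h1'⟩
    refine ⟨by simp [h1], ?_⟩
    simp [h1, h1']

/-- For `F_p`-linear endomorphisms `f, g` of `F_q` (`q = p^n`), the twisted horizontal
subgroups `^fH` and `^gH` are conjugate in the Heisenberg group `N₃(F_q)` if and only if
`f − g` is multiplication by some element of `F_q`, i.e. `f − g` is `F_q`-linear. -/
theorem twistedHorizontal_conjugate_iff (p n : ℕ) [Fact p.Prime] (hn : n ≠ 0)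
    (f g : GaloisField p n →ₗ[ZMod p] GaloisField p n) :
    (∃ h : Heisenberg (GaloisField p n),
        Subgroup.map (MulAut.conj h).toMonoidHom (twistedHorizontal f) = twistedHorizontal g) ↔
      ∃ c : GaloisField p n, ∀ x : GaloisField p n, f x - g x = c * x := by
  have hmem : ∀ (φ : GaloisField p n →ₗ[ZMod p] GaloisField p n)
      (m : Heisenberg (GaloisField p n)),
      m ∈ twistedHorizontal φ ↔ m.y = 0 ∧ m.t = φ m.x := fun _ _ => Iff.rfl
  constructor
  · rintro ⟨h, hh⟩
    refine ⟨h.y, fun x => ?_⟩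
    have hx : (⟨x, 0, f x⟩ : Heisenberg (GaloisField p n)) ∈ twistedHorizontal f :=
      ⟨rfl, rfl⟩
    have hmap : (MulAut.conj h).toMonoidHom ⟨x, 0, f x⟩ ∈ twistedHorizontal g := by
      rw [← hh]
      exact Subgroup.mem_map_of_mem _ hx
    rw [hmem] at hmap
    obtain ⟨hy, ht⟩ := hmap
    simp only [MulEquiv.coe_toMonoidHom, MulAut.conj_apply] at ht
    simp only [Heisenberg.mul_t, Heisenberg.mul_x, Heisenberg.mul_y, Heisenberg.inv_t,
      Heisenberg.inv_x, Heisenberg.inv_y, Heisenberg.mul_t] at ht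
    have hxx : h.x + x + -h.x = x := by ring
    rw [hxx] at ht
    linear_combination ht
  · rintro ⟨c, hc⟩
    refine ⟨⟨0, c, 0⟩, ?_⟩
    ext m
    rw [Subgroup.mem_map, hmem]
    constructor
    · rintro ⟨a, ha, rfl⟩
      rw [hmem] at ha
      obtain ⟨hy, ht⟩ := ha
      constructor
      · simp [hy]
      · have := hc a.x
        simp only [MulEquiv.coe_toMonoidHom, MulAut.conj_apply, Heisenberg.mul_t,
          Heisenberg.mul_x, Heisenberg.mul_y, Heisenberg.inv_t, Heisenberg.inv_x,
          Heisenberg.inv_y, hy, ht, zero_add, add_zero, neg_zero, mul_zero, zero_mul]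
        linear_combination this
    · rintro ⟨hy, ht⟩
      refine ⟨⟨m.x, 0, f m.x⟩, ⟨rfl, rfl⟩, ?_⟩
      ext
      · simp
      · simp [hy]
      · simp only [MulEquiv.coe_toMonoidHom, MulAut.conj_apply, Heisenberg.mul_t,
          Heisenberg.mul_x, Heisenberg.mul_y, Heisenberg.inv_t, Heisenberg.inv_x,
          Heisenberg.inv_y, ht, zero_add, add_zero, neg_zero, mul_zero, zero_mul]
        have := hc m.x
        linear_combination this
end

section
/- Let q = p^n and N = N_3(F_q) the Heisenberg group over F_q. For any F_p-linear endomorphisms f, g of F_q, the twisted horizontal subgroups ^fH(F_q) and ^gH(F_q) are almost conjugate in N: each conjugacy class of N meets both subgroups in sets of equal cardinality. -/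
theorem heis_aux_conj {K : Type*} [Field K] {x s t : K} (hx : x ≠ 0) :
    IsConj (⟨x, 0, s⟩ : Heisenberg K) ⟨x, 0, t⟩ := by
  rw [isConj_iff]
  refine ⟨⟨0, (s - t) / x, 0⟩, ?_⟩
  ext <;> simp
  field_simp
  ring

theorem heis_conj_fg {p : ℕ} [Fact p.Prime] {K : Type*} [Field K] [Module (ZMod p) K]
    (f g : K →ₗ[ZMod p] K) (x : K) :
    IsConj (⟨x, 0, f x⟩ : Heisenberg K) ⟨x, 0, g x⟩ := by
  by_cases hx : x = 0
  · subst hx; rw [map_zero, map_zero]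
  · exact heis_aux_conj hx

theorem heis_mem_eq {p : ℕ} [Fact p.Prime] {K : Type*} [Field K] [Module (ZMod p) K]
    {f : K →ₗ[ZMod p] K} {h : Heisenberg K} (hh : h ∈ twistedHorizontal f) :
    h = ⟨h.x, 0, f h.x⟩ := by
  obtain ⟨h1, h2⟩ := hh
  ext <;> simp [h1, h2]

theorem heis_key {p : ℕ} [Fact p.Prime] {K : Type*} [Field K] [Module (ZMod p) K]
    (f g : K →ₗ[ZMod p] K) (m : Heisenberg K)
    (h : {h : Heisenberg K // h ∈ twistedHorizontal f ∧ IsConj m h}) :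
    (⟨h.1.x, 0, g h.1.x⟩ : Heisenberg K) ∈ twistedHorizontal g ∧
      IsConj m (⟨h.1.x, 0, g h.1.x⟩ : Heisenberg K) := by
  obtain ⟨⟨x, y, t⟩, ⟨hy, ht⟩, hc⟩ := h
  simp only at hy ht hc ⊢
  subst hy ht
  exact ⟨⟨rfl, rfl⟩, hc.trans (heis_conj_fg f g x)⟩

/-- For any `F_p`-linear endomorphisms `f, g` of `F_q` (`q = p^n`), the twisted horizontal
subgroups `^fH(F_q)` and `^gH(F_q)` are almost conjugate in the Heisenberg group `N₃(F_q)`: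
every conjugacy class meets them in sets of equal cardinality. -/
theorem twistedHorizontal_almostConjugate (p n : ℕ) [Fact p.Prime] (hn : n ≠ 0)
    (f g : GaloisField p n →ₗ[ZMod p] GaloisField p n) :
    ∀ m : Heisenberg (GaloisField p n),
      Nat.card {h : Heisenberg (GaloisField p n) // h ∈ twistedHorizontal f ∧ IsConj m h} =
        Nat.card {h : Heisenberg (GaloisField p n) // h ∈ twistedHorizontal g ∧ IsConj m h} := by
  intro m
  apply Nat.card_congr
  exact
    { toFun := fun h => ⟨_, heis_key f g m h⟩
      invFun := fun h => ⟨_, heis_key g f m h⟩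
      left_inv := fun h => Subtype.ext (heis_mem_eq h.2.1).symm
      right_inv := fun h => Subtype.ext (heis_mem_eq h.2.1).symm }
end

section
/- Let q = p^n. The Heisenberg group N_3(F_q) contains at least p^{n(n−1)} pairwise almost conjugate, pairwise nonconjugate subgroups, namely the twisted horizontal subgroups ^fH(F_q) as f ranges over a set of coset representatives of F_q inside the F_p-linear endomorphisms of F_q. -/
/-- `H` and `K` are almost conjugate in `G`. -/
def AlmostConjugate {G : Type*} [Group G] (H K : Subgroup G) : Prop :=
  ∀ g : G, Nat.card {x : G // x ∈ H ∧ IsConj g x} = Nat.card {x : G // x ∈ K ∧ IsConj g x}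

/-- `H` and `K` are conjugate subgroups of `G`. -/
def ConjugateSubgroups {G : Type*} [Group G] (H K : Subgroup G) : Prop :=
  ∃ g : G, Subgroup.map (MulAut.conj g).toMonoidHom H = K


section Aux

variable {p : ℕ} [Fact p.Prime] {K : Type*} [Field K] [Module (ZMod p) K]

lemma mem_twisted (f : K →ₗ[ZMod p] K) (h : Heisenberg K) :
    h ∈ twistedHorizontal f ↔ h.y = 0 ∧ h.t = f h.x := Iff.rfl

lemma twisted_injective :
    Function.Injective (twistedHorizontal (p := p) (K := K)) := by
  intro f g hfg
  ext x
  have h1 : (⟨x, 0, f x⟩ : Heisenberg K) ∈ twistedHorizontal f := ⟨rfl, rfl⟩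
  rw [hfg] at h1
  exact h1.2

lemma isConj_of_x_ne (x t s : K) (hx : x ≠ 0) :
    IsConj (⟨x, 0, t⟩ : Heisenberg K) ⟨x, 0, s⟩ := by
  rw [isConj_iff]
  refine ⟨⟨0, (t - s) / x, 0⟩, ?_⟩
  ext
  · simp
  · simp
  · simp only [div_eq_mul_inv, Heisenberg.mul_t, Heisenberg.mul_x, Heisenberg.mul_y,
      Heisenberg.inv_t, Heisenberg.inv_x, Heisenberg.inv_y]
    field_simp
    ring

lemma isConj_twist (f g : K →ₗ[ZMod p] K) (x : K) :
    IsConj (⟨x, 0, f x⟩ : Heisenberg K) ⟨x, 0, g x⟩ := by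
  by_cases hx : x = 0
  · subst hx
    rw [map_zero f, map_zero g]
  · exact isConj_of_x_ne _ _ _ hx

lemma conj_move (f g : K →ₗ[ZMod p] K) (z h : Heisenberg K)
    (hm : h ∈ twistedHorizontal f) (hc : IsConj z h) :
    IsConj z (⟨h.x, 0, g h.x⟩ : Heisenberg K) := by
  have he : h = ⟨h.x, 0, f h.x⟩ := by
    ext
    · rfl
    · exact hm.1
    · exact hm.2
  exact (he ▸ hc).trans (isConj_twist f g h.x)

lemma almostConj_twisted (f g : K →ₗ[ZMod p] K) :
    AlmostConjugate (twistedHorizontal f) (twistedHorizontal g) := by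
  intro z
  apply Nat.card_congr
  refine ⟨fun h => ⟨⟨h.1.x, 0, g h.1.x⟩, ⟨rfl, rfl⟩, conj_move f g z h.1 h.2.1 h.2.2⟩,
          fun h => ⟨⟨h.1.x, 0, f h.1.x⟩, ⟨rfl, rfl⟩, conj_move g f z h.1 h.2.1 h.2.2⟩,
          ?_, ?_⟩ <;>
  · intro h
    apply Subtype.ext
    ext
    · rfl
    · exact h.2.1.1.symm
    · exact h.2.1.2.symm

lemma map_conj_twisted [SMulCommClass (ZMod p) K K] [IsScalarTower (ZMod p) K K]
    (f : K →ₗ[ZMod p] K) (z : Heisenberg K) :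
    Subgroup.map (MulAut.conj z).toMonoidHom (twistedHorizontal f)
      = twistedHorizontal (f - LinearMap.mul (ZMod p) K z.y) := by
  ext h
  rw [Subgroup.mem_map]
  constructor
  · rintro ⟨w, ⟨hy, ht⟩, rfl⟩
    constructor
    · simp [MulAut.conj_apply, hy]
    · simp [MulAut.conj_apply, hy, ht]
      ring
  · rintro ⟨hy, ht⟩
    refine ⟨⟨h.x, 0, f h.x⟩, ⟨rfl, rfl⟩, ?_⟩
    simp only [MulEquiv.coe_toMonoidHom, MulAut.conj_apply]
    simp only [LinearMap.sub_apply, LinearMap.mul_apply'] at ht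
    ext
    · simp
    · simp [hy]
    · simp only [Heisenberg.mul_t, Heisenberg.mul_x, Heisenberg.mul_y, Heisenberg.inv_t,
        Heisenberg.inv_x, Heisenberg.inv_y, mul_zero, add_zero]
      rw [ht]
      ring

end Aux

/-- The Heisenberg group `N₃(F_q)` (`q = p^n`) contains at least `p^{n(n−1)}` pairwise
almost conjugate, pairwise nonconjugate subgroups, namely twisted horizontal subgroups
`^fH(F_q)`. -/
theorem heisenberg_many_almostConjugate (p n : ℕ) [Fact p.Prime] (hn : n ≠ 0) :
    ∃ S : Finset (Subgroup (Heisenberg (GaloisField p n))),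
      p ^ (n * (n - 1)) ≤ S.card ∧
      (∀ H ∈ S, ∃ f : GaloisField p n →ₗ[ZMod p] GaloisField p n, H = twistedHorizontal f) ∧
      (∀ H ∈ S, ∀ K ∈ S, AlmostConjugate H K) ∧
      (∀ H ∈ S, ∀ K ∈ S, H ≠ K → ¬ ConjugateSubgroups H K) := by
  classical
  set Kq := GaloisField p n with hKq
  let μ : Kq →ₗ[ZMod p] (Kq →ₗ[ZMod p] Kq) := LinearMap.mul (ZMod p) Kq
  have hμinj : Function.Injective μ := by
    intro a b hab
    have := congrArg (fun φ => φ 1) hab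
    simpa [μ] using this
  let M := LinearMap.range μ
  haveI : Finite (Kq →ₗ[ZMod p] Kq) :=
    Finite.of_injective _ (DFunLike.coe_injective (F := Kq →ₗ[ZMod p] Kq))
  haveI : Finite ((Kq →ₗ[ZMod p] Kq) ⧸ M) := Quotient.finite _
  haveI : Fintype ((Kq →ₗ[ZMod p] Kq) ⧸ M) := Fintype.ofFinite _
  let S : Finset (Subgroup (Heisenberg Kq)) :=
    Finset.image (fun q : (Kq →ₗ[ZMod p] Kq) ⧸ M => twistedHorizontal q.out) Finset.univ
  have hrank : Module.finrank (ZMod p) ((Kq →ₗ[ZMod p] Kq) ⧸ M) = n * (n - 1) := by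
    have h1 : Module.finrank (ZMod p) Kq = n := GaloisField.finrank p hn
    have h2 : Module.finrank (ZMod p) (Kq →ₗ[ZMod p] Kq) = n * n := by
      rw [Module.finrank_linearMap, h1]
    have h3 : Module.finrank (ZMod p) M = n := by
      rw [LinearMap.finrank_range_of_inj hμinj, h1]
    have h4 := Submodule.finrank_quotient_add_finrank M
    rw [h2, h3] at h4
    have h5 : n * (n - 1) + n = n * n := by
      cases n with
      | zero => exact absurd rfl hn
      | succ m => rw [Nat.succ_sub_one, Nat.mul_succ]
    omega
  have hcard : Fintype.card ((Kq →ₗ[ZMod p] Kq) ⧸ M) = p ^ (n * (n - 1)) := by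
    rw [Module.card_eq_pow_finrank (K := ZMod p), hrank, ZMod.card]
  refine ⟨S, ?_, ?_, ?_, ?_⟩
  · have hinj : Function.Injective
        (fun q : (Kq →ₗ[ZMod p] Kq) ⧸ M => twistedHorizontal (Quotient.out q)) :=
      fun a b hab => Quotient.out_injective (twisted_injective hab)
    rw [Finset.card_image_of_injective _ hinj, Finset.card_univ, hcard]
  · intro H hH
    rcases Finset.mem_image.1 hH with ⟨a, -, rfl⟩
    exact ⟨a.out, rfl⟩
  · intro H hH L hL
    rcases Finset.mem_image.1 hH with ⟨a, -, rfl⟩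
    rcases Finset.mem_image.1 hL with ⟨b, -, rfl⟩
    exact almostConj_twisted _ _
  · intro H hH L hL hne hconj
    rcases Finset.mem_image.1 hH with ⟨a, -, rfl⟩
    rcases Finset.mem_image.1 hL with ⟨b, -, rfl⟩
    rcases hconj with ⟨z, hz⟩
    rw [map_conj_twisted] at hz
    have h1 := twisted_injective hz
    have hfg : a.out - b.out ∈ M := ⟨z.y, by rw [← h1]; simp only [μ]; abel⟩
    have hab : a = b := by
      have := (Submodule.Quotient.eq M).2 hfg
      rwa [show Submodule.Quotient.mk a.out = a from Quotient.out_eq' a,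
        show Submodule.Quotient.mk b.out = b from Quotient.out_eq' b] at this
    exact hne (by rw [hab])
end
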